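/- For all n ∈ ℕ, all L ≥ 1 and all y ∈ Y, one has Σ_y^L(n + 3^L) ≥ Σ_y^L(n) + 1. Consequently, Σ_y^L(n) ≥ ⌊n/3^L⌋ for all n. -/

import Mathlib

open MeasureTheory Filter Topology
open scoped ENNReal

attribute [local instance] Classical.propDecidable

noncomputable section

/-- The shift map on bi-infinite sequences: `(S x) n = x (n+1)`. -/
def shift {α : Type*} (x : ℤ → α) : ℤ → α := fun n => x (n + 1)

/-- Shift by an arbitrary integer amount `m`. -/
def shiftZ {α : Type*} (m : ℤ) (x : ℤ → α) : ℤ → α := fun n => x (n + m)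

/-- A run structure on a bi-infinite sequence `x`: `t k` is the starting index of the
`k`-th maximal mono-symbol block of `x`, indexed so that block `0` contains position `0`. -/
structure RunStructure (x : ℤ → ℕ) where
  t : ℤ → ℤ
  mono : StrictMono t
  start_nonpos : t 0 ≤ 0
  start_pos : 0 < t 1
  const : ∀ k i : ℤ, t k ≤ i → i < t (k + 1) → x i = x (t k)
  alt : ∀ k : ℤ, x (t (k + 1)) ≠ x (t k)

/-- `d` is the run-length derivative of `x`: `d k` is the length of the `k`-th run. -/
def IsDelta (x d : ℤ → ℕ) : Prop :=
  ∃ r : RunStructure x, ∀ k : ℤ, (d k : ℤ) = r.t (k + 1) - r.t k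

/-- The run-length derivative operator `Δ` (junk value when no derivative exists). -/
def delta (x : ℤ → ℕ) : ℤ → ℕ :=
  if h : ∃ d, IsDelta x d then h.choose else fun _ => 0

/-- A bi-infinite sequence is smooth over `{1,3}` if all its iterated derivatives exist
and take values in `{1,3}`. -/
def SmoothSeq (x : ℤ → ℕ) : Prop :=
  ∀ k : ℕ, ∀ n : ℤ, delta^[k] x n = 1 ∨ delta^[k] x n = 3

/-- The set `X` of bi-infinite smooth sequences over `{1,3}`. -/
def SmoothX : Set (ℤ → ℕ) := {x | SmoothSeq x}

/-- The recoding alphabet: `A = 1`, `B = 3`, `C = 111`, `D = 333`. -/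
inductive ABCD : Type
  | A | B | C | D
deriving DecidableEq

instance : TopologicalSpace ABCD := ⊥
instance : DiscreteTopology ABCD := ⟨rfl⟩
instance : MeasurableSpace ABCD := ⊤

open ABCD

/-- The symbol (1 or 3) of the run encoded by a letter. -/
def sval : ABCD → ℕ
  | A => 1
  | B => 3
  | C => 1
  | D => 3

/-- The length (1 or 3) of the run encoded by a letter; this is also the value of `Δx`
at the corresponding position. -/
def lval : ABCD → ℕ
  | A => 1
  | B => 1
  | C => 3
  | D => 3

/-- `y` is the recoding of `x`: the letter `y k` encodes the `k`-th run of `x`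
(its symbol and its length). -/
def IsRecoding (x : ℤ → ℕ) (y : ℤ → ABCD) : Prop :=
  ∃ r : RunStructure x, ∀ k : ℤ,
    x (r.t k) = sval (y k) ∧ r.t (k + 1) - r.t k = (lval (y k) : ℤ)

/-- The recoding map `rec` (junk value when no recoding exists). -/
def recode (x : ℤ → ℕ) : ℤ → ABCD :=
  if h : ∃ y, IsRecoding x y then h.choose else fun _ => A

/-- The set `Y = rec(X)` of recodings of smooth sequences. -/
def SmoothY : Set (ℤ → ABCD) := recode '' SmoothX

/-- The derivative operator induced on recodings: since `(Δx) i = lval (rec x i)`,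
we have `Δ(rec x) = rec (Δ x) = recode (lval ∘ rec x)`. -/
def deltaY (y : ℤ → ABCD) : ℤ → ABCD := recode fun i => (lval (y i) : ℕ)

/-- `y` is well-aligned: the elementary block of `y` containing coordinate `0` starts
at position `0` (elementary blocks of `y` are exactly the runs of `Δx`, and
`(Δx) i = lval (y i)`). -/
def WellAligned (y : ℤ → ABCD) : Prop := lval (y (-1)) ≠ lval (y 0)

/-- `B_Y^L`: the set of `y ∈ Y` such that `y, Δy, ..., Δ^{L-1} y` are all well-aligned. -/
def BY (L : ℕ) : Set (ℤ → ABCD) :=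
  {y | y ∈ SmoothY ∧ ∀ l < L, WellAligned (deltaY^[l] y)}

/-- `Σ_y^L(n) = #{k ∈ [1,n] : S^k y ∈ B_Y^L}`. -/
def SigY (L : ℕ) (y : ℤ → ABCD) (n : ℕ) : ℕ :=
  ((Finset.Icc 1 n).filter fun k => shift^[k] y ∈ BY L).card

/-- `y` contains an elementary block in `{ABA, DCD}` (for `y ∈ Y`, any such factor is
automatically an elementary block). -/
def HasType0 (y : ℤ → ABCD) : Prop :=
  ∃ i : ℤ, (y i = A ∧ y (i + 1) = B ∧ y (i + 2) = A) ∨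
           (y i = D ∧ y (i + 1) = C ∧ y (i + 2) = D)

/-- `y` contains an elementary block in `{BAB, CDC}`. -/
def HasType1 (y : ℤ → ABCD) : Prop :=
  ∃ i : ℤ, (y i = B ∧ y (i + 1) = A ∧ y (i + 2) = B) ∨
           (y i = C ∧ y (i + 1) = D ∧ y (i + 2) = C)

/-- The type of a recoded sequence: `false` = type 0, `true` = type 1. -/
def typeOf (y : ℤ → ABCD) : Bool := decide (HasType1 y)

/-- The sequence of types of the successive derivatives of a smooth sequence `x`. -/
def TypesX (x : ℤ → ℕ) : ℕ → Bool := fun n => typeOf (recode (delta^[n] x))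

/-- The sequence of types of the successive derivatives of a recoded sequence `y`. -/
def TypesY (y : ℤ → ABCD) : ℕ → Bool := fun n => typeOf (deltaY^[n] y)

/-- `X_τ`: smooth bi-infinite sequences whose type sequence is exactly `τ`. -/
def Xset (τ : ℕ → Bool) : Set (ℤ → ℕ) := {x ∈ SmoothX | TypesX x = τ}

/-- `Y_τ = rec(X_τ)`. -/
def Yset (τ : ℕ → Bool) : Set (ℤ → ABCD) := recode '' Xset τ

/-- A sequence over `{A,B,C,D}` is alternating: no two consecutive symbols in `{A,C}`
and no two consecutive symbols in `{B,D}`. -/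
def Alternating (y : ℤ → ABCD) : Prop := ∀ n : ℤ, sval (y n) ≠ sval (y (n + 1))

/-- The substitutions `φ₀` and `φ₁` on letters. -/
def phiW : Bool → ABCD → List ABCD
  | false, A => [A]
  | false, B => [D]
  | false, C => [A, B, A]
  | false, D => [D, C, D]
  | true, A => [B]
  | true, B => [C]
  | true, C => [B, A, B]
  | true, D => [C, D, C]

/-- `z` is the image of the bi-infinite sequence `y` under the substitution `φ_t`, with
the convention that the image of the letter at position `0` starts at position `0`. -/
def IsSubst (t : Bool) (y z : ℤ → ABCD) : Prop :=
  ∃ u : ℤ → ℤ, u 0 = 0 ∧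
    (∀ k : ℤ, u (k + 1) = u k + (phiW t (y k)).length) ∧
    (∀ k : ℤ, ∀ j : Fin (phiW t (y k)).length, z (u k + (j : ℕ)) = (phiW t (y k)).get j)

/-- The substitution `φ_t` on bi-infinite sequences. -/
def substF (t : Bool) (y : ℤ → ABCD) : ℤ → ABCD :=
  if h : ∃ z, IsSubst t y z then h.choose else y

/-- The composition `φ_{τ₀} ∘ φ_{τ₁} ∘ ⋯ ∘ φ_{τ_{L-1}}`. -/
def substComp (τ : ℕ → Bool) : ℕ → (ℤ → ABCD) → (ℤ → ABCD)
  | 0 => id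
  | L + 1 => substF (τ 0) ∘ substComp (fun n => τ (n + 1)) L

/-- The homographies `h₀` and `h₁`. -/
def hmap : Bool → ℝ × ℝ → ℝ × ℝ
  | false, p => ((1 - p.1) / (3 - 2 * (p.1 + p.2)), (1 / 2 - p.1) / (3 - 2 * (p.1 + p.2)))
  | true, p => ((1 / 2 - p.1) / (3 - 2 * (p.1 + p.2)), (1 - p.1) / (3 - 2 * (p.1 + p.2)))

/-- The square `K = [0,1/2] × [0,1/2]`. -/
def Ksq : Set (ℝ × ℝ) := Set.Icc (0 : ℝ) (1 / 2) ×ˢ Set.Icc (0 : ℝ) (1 / 2)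

/-- The domain `E = {(a,b) ∈ K : a + b ≤ 3/4}`. -/
def Eset : Set (ℝ × ℝ) := {p ∈ Ksq | p.1 + p.2 ≤ 3 / 4}

/-- The composition `h_{t₀} ∘ h_{t₁} ∘ ⋯ ∘ h_{t_L}`. -/
def hComp (t : ℕ → Bool) : ℕ → (ℝ × ℝ → ℝ × ℝ)
  | 0 => hmap (t 0)
  | L + 1 => hComp t L ∘ hmap (t (L + 1))

/-- The point `(a(t), b(t))`, unique point of `⋂_L (h_{t₀} ∘ ⋯ ∘ h_{t_L})(E)`. -/
def abPoint (t : ℕ → Bool) : ℝ × ℝ :=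
  if h : ∃ p : ℝ × ℝ, (⋂ L : ℕ, hComp t L '' Eset) = {p} then h.choose else 0

/-- The number of occurrences of the letter `s` among positions `1, ..., m` of `z`. -/
def letterCount (s : ABCD) (z : ℤ → ABCD) (m : ℕ) : ℕ :=
  ((Finset.Icc 1 m).filter fun k => z (k : ℤ) = s).card

/-- `w` occurs as a factor of `y` at position `i`. -/
def IsFactorAt (w : List ABCD) (y : ℤ → ABCD) (i : ℤ) : Prop :=
  ∀ j : Fin w.length, y (i + (j : ℕ)) = w.get j

/-- The cylinder set `[w]` in `{1,3}^ℤ`. -/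
def cylX (w : List ℕ) : Set (ℤ → ℕ) :=
  {x | ∀ j : Fin w.length, x ((j : ℕ) : ℤ) = w.get j}

/-- The cylinder set `[w]` in `{A,B,C,D}^ℤ`. -/
def cylY (w : List ABCD) : Set (ℤ → ABCD) :=
  {y | ∀ j : Fin w.length, y ((j : ℕ) : ℤ) = w.get j}

/-- The number of occurrences of the finite word `w` in the prefix `x₀ ⋯ x_{n-1}`. -/
def occCount (x : ℤ → ℕ) (w : List ℕ) (n : ℕ) : ℕ :=
  ((Finset.range n).filter fun i =>
    i + w.length ≤ n ∧ ∀ j : Fin w.length, x (((i + (j : ℕ) : ℕ)) : ℤ) = w.get j).card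

/-- A subshift `Z` is minimal if it contains no nonempty proper closed shift-invariant
subset. -/
def ShiftMinimal {α : Type*} [TopologicalSpace α] (Z : Set (ℤ → α)) : Prop :=
  ∀ W : Set (ℤ → α), W ⊆ Z → W.Nonempty → IsClosed W → shift '' W = W → W = Z

/-! A shift of `rec x` is well-aligned exactly at the run starts of `Δx`, and there its derivative
is a shift of `rec (Δx)`. Since the runs of `Δx` have length at most `3`, consecutive run starts
of `Δx` are at most `3` apart, so by induction on `L` every window of `3^L` consecutive shifts of
`y ∈ Y` meets `B_Y^L`. The lower bound `⌊n / 3^L⌋` follows by iterating this. -/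

lemma Int.sub_le_sub_of_strictMono {t : ℤ → ℤ} (ht : StrictMono t) {a b : ℤ}
    (hab : a ≤ b) : b - a ≤ t b - t a := by
  induction b, hab using Int.leInduction with
  | base => simp
  | succ b _ ih => have := ht (lt_add_one b); omega

lemma StrictMono.exists_apply_le_lt {t : ℤ → ℤ} (ht : StrictMono t) (c : ℤ) :
    ∃ k, t k ≤ c ∧ c < t (k + 1) := by
  have hbdd : ∀ k, t k ≤ c → k ≤ max 0 (c - t 0) := fun k hk => by
    rcases le_total k 0 with h | h
    · exact h.trans (le_max_left _ _)
    · have := Int.sub_le_sub_of_strictMono ht h; omega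
  have hne : t (min 0 (c - t 0)) ≤ c := by
    have := Int.sub_le_sub_of_strictMono ht (min_le_left 0 (c - t 0)); omega
  obtain ⟨k, hk, hmax⟩ := Int.exists_greatest_of_bdd ⟨_, hbdd⟩ ⟨_, hne⟩
  exact ⟨k, hk, not_le.1 fun h => by have := hmax _ h; omega⟩

section StrictMonoInt

variable {α : Type*} [LinearOrder α] {t t' : ℤ → α}

lemma StrictMono.apply_succ_le_of_range_subset (ht : StrictMono t) (ht' : StrictMono t')
    (hr : Set.range t' ⊆ Set.range t) {k : ℤ} (hk : t k = t' k) : t (k + 1) ≤ t' (k + 1) := by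
  obtain ⟨j, hj⟩ := hr ⟨k + 1, rfl⟩
  have : k < j := ht.lt_iff_lt.1 (by rw [hj, hk]; exact ht' (lt_add_one k))
  exact hj ▸ ht.monotone (by omega)

lemma StrictMono.apply_pred_le_of_range_subset (ht : StrictMono t) (ht' : StrictMono t')
    (hr : Set.range t' ⊆ Set.range t) {k : ℤ} (hk : t k = t' k) : t' (k - 1) ≤ t (k - 1) := by
  obtain ⟨j, hj⟩ := hr ⟨k - 1, rfl⟩
  have : j < k := ht.lt_iff_lt.1 (by rw [hj, hk]; exact ht' (sub_one_lt k))
  exact hj ▸ ht.monotone (by omega)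

lemma StrictMono.eq_of_range_eq (ht : StrictMono t) (ht' : StrictMono t')
    (hr : Set.range t = Set.range t') (h0 : t 0 = t' 0) : t = t' := by
  funext k
  induction k using Int.induction_on with
  | zero => exact h0
  | succ k ih =>
    exact le_antisymm (ht.apply_succ_le_of_range_subset ht' hr.ge ih)
      (ht'.apply_succ_le_of_range_subset ht hr.le ih.symm)
  | pred k ih =>
    exact le_antisymm (ht'.apply_pred_le_of_range_subset ht hr.le ih.symm)
      (ht.apply_pred_le_of_range_subset ht' hr.ge ih)

end StrictMonoInt

namespace RunStructure

variable {x : ℤ → ℕ} (r : RunStructure x)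

lemma exists_mem_run (c : ℤ) : ∃ k, r.t k ≤ c ∧ c < r.t (k + 1) :=
  r.mono.exists_apply_le_lt c

lemma apply_pred_ne_iff (i : ℤ) : x (i - 1) ≠ x i ↔ i ∈ Set.range r.t := by
  constructor
  · intro h
    obtain ⟨k, hk, hk'⟩ := r.exists_mem_run (i - 1)
    by_contra hi
    have hik : i < r.t (k + 1) := lt_of_le_of_ne (by omega) fun h' => hi ⟨k + 1, h'.symm⟩
    exact h ((r.const k _ hk hk').trans (r.const k i (by omega) hik).symm)
  · rintro ⟨k, rfl⟩
    obtain ⟨j, rfl⟩ : ∃ j, k = j + 1 := ⟨k - 1, by ring⟩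
    have := r.mono (lt_add_one j)
    rw [r.const j _ (by omega) (by omega)]
    exact (r.alt j).symm

lemma range_eq (r' : RunStructure x) : Set.range r.t = Set.range r'.t := by
  ext i
  rw [← r.apply_pred_ne_iff, r'.apply_pred_ne_iff]

lemma le_t_zero {i : ℤ} (hi : i ∈ Set.range r.t) (h : i ≤ 0) : i ≤ r.t 0 := by
  obtain ⟨k, rfl⟩ := hi
  have : k < 1 := r.mono.lt_iff_lt.1 (h.trans_lt r.start_pos)
  exact r.mono.monotone (by omega)

/-- `delta` and `recode` are defined by choice; this lets any run structure compute them. -/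
lemma t_unique (r' : RunStructure x) : r.t = r'.t :=
  r.mono.eq_of_range_eq r'.mono (r.range_eq r') <| le_antisymm
    (r'.le_t_zero (r'.range_eq r ▸ ⟨0, rfl⟩) r.start_nonpos)
    (r.le_t_zero (r.range_eq r' ▸ ⟨0, rfl⟩) r'.start_nonpos)

lemma t_sub_le_mul {b : ℤ} (hb : ∀ k, r.t (k + 1) - r.t k ≤ b) {a c : ℤ} (hac : a ≤ c) :
    r.t c - r.t a ≤ b * (c - a) := by
  induction c, hac using Int.leInduction with
  | base => simp
  | succ c _ ih => have := hb c; linarith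

def shifted {c m : ℤ} (h1 : r.t m ≤ c) (h2 : c < r.t (m + 1)) : RunStructure (shiftZ c x) where
  t k := r.t (k + m) - c
  mono a b h := by simpa using r.mono (by omega : a + m < b + m)
  start_nonpos := by simpa using h1
  start_pos := by simpa [add_comm] using h2
  const k i hk hk' := by
    simp only [shiftZ, sub_add_cancel]
    exact r.const (k + m) (i + c) (by omega) (by rw [add_right_comm]; omega)
  alt k := by simpa [shiftZ, add_right_comm] using r.alt (k + m)

end RunStructure


variable {x : ℤ → ℕ}

lemma delta_spec (r : RunStructure x) (k : ℤ) : (delta x k : ℤ) = r.t (k + 1) - r.t k := by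
  have hex : ∃ d, IsDelta x d :=
    ⟨fun k => (r.t (k + 1) - r.t k).toNat, r, fun k => by
      dsimp only; have := r.mono (lt_add_one k); omega⟩
  obtain ⟨r', hr'⟩ : IsDelta x (delta x) := by rw [delta, dif_pos hex]; exact hex.choose_spec
  rw [hr', r'.t_unique r]

lemma delta_shiftZ (r : RunStructure x) {c m : ℤ} (h1 : r.t m ≤ c) (h2 : c < r.t (m + 1)) :
    delta (shiftZ c x) = shiftZ m (delta x) := by
  funext k
  have hs := delta_spec (r.shifted h1 h2) k
  have hd := delta_spec r (k + m)
  simp only [RunStructure.shifted, add_right_comm k 1 m] at hs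
  simp only [shiftZ]
  omega

lemma SmoothSeq.apply_eq_one_or_three (hx : SmoothSeq x) (n : ℤ) : x n = 1 ∨ x n = 3 := hx 0 n

lemma SmoothSeq.delta_eq_one_or_three (hx : SmoothSeq x) (n : ℤ) :
    delta x n = 1 ∨ delta x n = 3 := hx 1 n

protected lemma SmoothSeq.delta (hx : SmoothSeq x) : SmoothSeq (delta x) :=
  fun k n => hx (k + 1) n

lemma SmoothSeq.nonempty_runStructure (hx : SmoothSeq x) : Nonempty (RunStructure x) := by
  by_contra h
  have hne : ¬ ∃ d, IsDelta x d := fun ⟨_, r, _⟩ => h ⟨r⟩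
  have h0 := hx.delta_eq_one_or_three 0
  simp only [delta, dif_neg hne] at h0
  omega

lemma SmoothSeq.shiftZ (hx : SmoothSeq x) (c : ℤ) : SmoothSeq (shiftZ c x) := by
  intro k
  induction k generalizing x c with
  | zero => exact fun n => hx.apply_eq_one_or_three (n + c)
  | succ k ih =>
    obtain ⟨r⟩ := hx.nonempty_runStructure
    obtain ⟨m, h1, h2⟩ := r.exists_mem_run c
    rw [Function.iterate_succ, Function.comp_apply, delta_shiftZ r h1 h2]
    exact ih hx.delta m

lemma ABCD.ext_sval_lval {a b : ABCD} (h1 : sval a = sval b) (h2 : lval a = lval b) :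
    a = b := by
  cases a <;> cases b <;> simp_all [sval, lval]

lemma ABCD.exists_sval_lval {s l : ℕ} (hs : s = 1 ∨ s = 3) (hl : l = 1 ∨ l = 3) :
    ∃ a, sval a = s ∧ lval a = l := by
  rcases hs with rfl | rfl <;> rcases hl with rfl | rfl
  exacts [⟨A, rfl, rfl⟩, ⟨C, rfl, rfl⟩, ⟨B, rfl, rfl⟩, ⟨D, rfl, rfl⟩]

lemma recode_spec (hx : SmoothSeq x) (r : RunStructure x) (k : ℤ) :
    x (r.t k) = sval (recode x k) ∧ r.t (k + 1) - r.t k = lval (recode x k) := by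
  have hex : ∃ y, IsRecoding x y := by
    choose a ha using fun k =>
      ABCD.exists_sval_lval (hx.apply_eq_one_or_three (r.t k)) (hx.delta_eq_one_or_three k)
    exact ⟨a, r, fun k => ⟨(ha k).1.symm, by rw [(ha k).2, delta_spec r]⟩⟩
  obtain ⟨r', hr'⟩ : IsRecoding x (recode x) := by
    rw [recode, dif_pos hex]; exact hex.choose_spec
  simpa only [r'.t_unique r] using hr' k

lemma lval_recode (hx : SmoothSeq x) (i : ℤ) : lval (recode x i) = delta x i := by
  obtain ⟨r⟩ := hx.nonempty_runStructure
  have h1 := (recode_spec hx r i).2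
  have h2 := delta_spec r i
  omega

lemma deltaY_recode (hx : SmoothSeq x) : deltaY (recode x) = recode (delta x) :=
  congrArg recode (funext (lval_recode hx))

lemma recode_shiftZ (hx : SmoothSeq x) (r : RunStructure x) (m : ℤ) :
    recode (shiftZ (r.t m) x) = shiftZ m (recode x) := by
  funext k
  have e1 := recode_spec (hx.shiftZ _) (r.shifted le_rfl (r.mono (lt_add_one m))) k
  have e2 := recode_spec hx r (k + m)
  simp only [RunStructure.shifted, shiftZ, sub_add_cancel, add_right_comm k 1 m] at e1 ⊢
  refine ABCD.ext_sval_lval (e1.1.symm.trans e2.1) ?_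
  have := e1.2
  have := e2.2
  omega

lemma shiftZ_mem_smoothY {y : ℤ → ABCD} (hy : y ∈ SmoothY) (m : ℤ) :
    shiftZ m y ∈ SmoothY := by
  obtain ⟨x, hx, rfl⟩ := hy
  obtain ⟨r⟩ := hx.nonempty_runStructure
  exact ⟨_, hx.shiftZ (r.t m), recode_shiftZ hx r m⟩

lemma deltaY_shiftZ_recode (hx : SmoothSeq x) (s : RunStructure (delta x)) (j : ℤ) :
    deltaY (shiftZ (s.t j) (recode x)) = shiftZ j (recode (delta x)) := by
  obtain ⟨r⟩ := hx.nonempty_runStructure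
  rw [← recode_shiftZ hx r, deltaY_recode (hx.shiftZ _),
    delta_shiftZ r le_rfl (r.mono (lt_add_one _)), recode_shiftZ hx.delta s]

lemma wellAligned_shiftZ_recode_iff (hx : SmoothSeq x) (s : RunStructure (delta x)) (m : ℤ) :
    WellAligned (shiftZ m (recode x)) ↔ m ∈ Set.range s.t := by
  rw [← s.apply_pred_ne_iff]
  simp only [WellAligned, shiftZ, lval_recode hx, neg_add_eq_sub, zero_add]

lemma mem_BY_succ {y : ℤ → ABCD} {L : ℕ} (hy : y ∈ SmoothY) (h0 : WellAligned y)
    (h : deltaY y ∈ BY L) : y ∈ BY (L + 1) := by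
  refine ⟨hy, ?_⟩
  rintro (_ | l) hl
  exacts [h0, h.2 l (by omega)]

lemma exists_shiftZ_recode_mem_BY (L : ℕ) (hx : SmoothSeq x) (n : ℤ) :
    ∃ m, n < m ∧ m ≤ n + 3 ^ L ∧ shiftZ m (recode x) ∈ BY L := by
  induction L generalizing x n with
  | zero =>
    exact ⟨n + 1, by omega, by simp,
      shiftZ_mem_smoothY ⟨x, hx, rfl⟩ _, fun _ hl => absurd hl (Nat.not_lt_zero _)⟩
  | succ L ih =>
    obtain ⟨s⟩ := hx.delta.nonempty_runStructure
    obtain ⟨j₀, hj₀n, hnj₀⟩ := s.exists_mem_run n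
    obtain ⟨j, hj₀j, hjj₀, hj⟩ := ih hx.delta j₀
    have hgap : ∀ k, s.t (k + 1) - s.t k ≤ 3 := fun k => by
      have := delta_spec s k; have := hx.delta.delta_eq_one_or_three k; omega
    have hspan := s.t_sub_le_mul hgap hj₀j.le
    refine ⟨s.t j, hnj₀.trans_le (s.mono.monotone (by omega)), by rw [pow_succ]; omega,
      mem_BY_succ (shiftZ_mem_smoothY ⟨x, hx, rfl⟩ _)
        ((wellAligned_shiftZ_recode_iff hx s _).2 ⟨j, rfl⟩) ?_⟩
    rwa [deltaY_shiftZ_recode hx s]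

lemma shift_iterate {α : Type*} (y : ℤ → α) (k : ℕ) : shift^[k] y = shiftZ k y := by
  induction k with
  | zero => funext n; simp [shiftZ]
  | succ k ih =>
    funext n
    rw [Function.iterate_succ_apply', ih]
    simp only [shift, shiftZ]
    congr 1
    push_cast; ring

lemma exists_shift_iterate_mem_BY (L : ℕ) {y : ℤ → ABCD} (hy : y ∈ SmoothY) (n : ℕ) :
    ∃ k : ℕ, n < k ∧ k ≤ n + 3 ^ L ∧ shift^[k] y ∈ BY L := by
  obtain ⟨x, hx, rfl⟩ := hy
  obtain ⟨m, hnm, hm, hmB⟩ := exists_shiftZ_recode_mem_BY L hx n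
  lift m to ℕ using by omega
  exact ⟨m, by exact_mod_cast hnm, by exact_mod_cast hm, shift_iterate _ m ▸ hmB⟩

lemma Finset.card_filter_Icc_add_one_le {P : ℕ → Prop} [DecidablePred P] {n p k : ℕ}
    (hnk : n < k) (hk : k ≤ n + p) (hP : P k) :
    ((Icc 1 n).filter P).card + 1 ≤ ((Icc 1 (n + p)).filter P).card := by
  refine card_lt_card <| (ssubset_iff_of_subset
    (filter_subset_filter _ (Icc_subset_Icc_right (by omega)))).2 ⟨k, ?_, ?_⟩
  · exact mem_filter.2 ⟨mem_Icc.2 ⟨by omega, hk⟩, hP⟩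
  · simp only [mem_filter, mem_Icc]; omega

lemma Monotone.div_le_of_add_one_le {f : ℕ → ℕ} (hf : Monotone f) {p : ℕ}
    (h : ∀ n, f n + 1 ≤ f (n + p)) (n : ℕ) : n / p ≤ f n := by
  have hq : ∀ q, q ≤ f (q * p) := by
    intro q
    induction q with
    | zero => exact Nat.zero_le _
    | succ q ih => have := h (q * p); rw [Nat.succ_mul]; omega
  exact (hq _).trans (hf (Nat.div_mul_le_self n p))

lemma sigY_monotone (L : ℕ) (y : ℤ → ABCD) : Monotone (SigY L y) := fun _ _ h =>
  Finset.card_le_card (Finset.filter_subset_filter _ (Finset.Icc_subset_Icc_right h))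

theorem stmt2_general (n L : ℕ) (y : ℤ → ABCD) (hy : y ∈ SmoothY) :
    SigY L y n + 1 ≤ SigY L y (n + 3 ^ L) ∧ n / 3 ^ L ≤ SigY L y n := by
  have step : ∀ n, SigY L y n + 1 ≤ SigY L y (n + 3 ^ L) := fun n => by
    obtain ⟨k, hnk, hk, hkB⟩ := exists_shift_iterate_mem_BY L hy n
    exact Finset.card_filter_Icc_add_one_le hnk hk hkB
  exact ⟨step n, (sigY_monotone L y).div_le_of_add_one_le step n⟩

/-- Lower bound for `Σ_y^L`.
For all `n ∈ ℕ`, all `L ≥ 1` and all `y ∈ Y`, `Σ_y^L(n + 3^L) ≥ Σ_y^L(n) + 1`;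
consequently `Σ_y^L(n) ≥ ⌊n / 3^L⌋`. -/
theorem stmt2 (n L : ℕ) (hL : 1 ≤ L) (y : ℤ → ABCD) (hy : y ∈ SmoothY) :
    SigY L y n + 1 ≤ SigY L y (n + 3 ^ L) ∧ n / 3 ^ L ≤ SigY L y n :=
  stmt2_general n L y hy
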